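/- Let 0<p<∞, φ∈𝒢_p(𝔻), φ(1)=1, sup_k φ(2^k)=∞, and lim_{k→∞} 2^{−kd/p}φ(2^k)=0. Let m_{φ,p}^{00} be the closure of the finitely supported sequences in m_{φ,p}(ℤ^d) and m_{φ,p}^0 = m_{φ,p}(ℤ^d) ∩ c₀(ℤ^d). Then m_{φ,p}^0 is closed in m_{φ,p}(ℤ^d), and m_{φ,p}^{00} ⊊ m_{φ,p}^0 ⊊ m_{φ,p}(ℤ^d): all three inclusions are strict. -/

import Mathlib

/-!
Since `φ(1) = 1`, the quasi-norm dominates the sup norm; hence `m⁰` is closed and contains `m⁰⁰`.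
Both strict inclusions are witnessed by sequences equal to `φ(2^{s_i})⁻¹` on dyadic cubes
`Q_{-s_i}` placed so sparsely along a coordinate axis that a dyadic cube meeting two of them, the
`i`-th and an earlier one, has side at least `2^{L_i}`; as `2^{-kd/p} φ(2^k) → 0`, the `L_i` can be
chosen so that these later cubes contribute a geometric series, and the quasi-norm stays bounded.
For `s_i = 0` the sequence is `1` at infinitely many points, so it is not in `c₀`. Choosing
`φ(2^{s_i}) > i + 1`, possible as `φ` is unbounded, it tends to `0`, but each of its cubes alone has
quasi-norm `1`, so no finitely supported sequence approximates it.
-/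

open ENNReal Filter

noncomputable section

/-- `Q_{0,k} ⊂ Q_{-j,m}` for dyadic cubes `Q_{-j,m} = 2^j([0,1)^d + m)`. -/
def inCube (d j : ℕ) (m k : Fin d → ℤ) : Prop :=
  ∀ i, 2 ^ j * m i ≤ k i ∧ k i < 2 ^ j * (m i + 1)

/-- the local quantity `(Σ_{k : Q_{0,k} ⊂ Q_{-j,m}} |λ_k|^p)^{1/p}`, in `ℝ≥0∞`. -/
def localSum (d : ℕ) (p : ℝ) (j : ℕ) (m : Fin d → ℤ)
    (lam : (Fin d → ℤ) → ℂ) : ℝ≥0∞ :=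
  (∑' k : {k : Fin d → ℤ // inCube d j m k}, ENNReal.ofReal ‖lam k.1‖ ^ p) ^ (1 / p)

/-- quasi-norm of the generalised Morrey sequence space `m_{φ,p}(ℤ^d)`;
`φ j` stands for `φ(2^j)`. -/
def mNorm (d : ℕ) (p : ℝ) (φ : ℕ → ℝ) (lam : (Fin d → ℤ) → ℂ) : ℝ≥0∞ :=
  ⨆ (j : ℕ) (m : Fin d → ℤ),
    ENNReal.ofReal (φ j) * (2 : ℝ≥0∞) ^ (-((j : ℝ) * d) / p) * localSum d p j m lam

def ellpNorm (d : ℕ) (p : ℝ) (lam : (Fin d → ℤ) → ℂ) : ℝ≥0∞ :=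
  (∑' k : Fin d → ℤ, ENNReal.ofReal ‖lam k‖ ^ p) ^ (1 / p)

def linftyNorm (d : ℕ) (lam : (Fin d → ℤ) → ℂ) : ℝ≥0∞ :=
  ⨆ k : Fin d → ℤ, ENNReal.ofReal ‖lam k‖

/-- the class `𝒢_p(𝔻)`: `φ(2^k)` is positive, nondecreasing and
`2^{-kd/p} φ(2^k)` is nonincreasing. -/
def Gp (d : ℕ) (p : ℝ) (φ : ℕ → ℝ) : Prop :=
  (∀ k, 0 < φ k) ∧
  ∀ j k : ℕ, j ≤ k → φ j ≤ φ k ∧ φ k ≤ φ j * 2 ^ (((k : ℝ) - j) * d / p)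



def dyadicCube (d j : ℕ) (m : Fin d → ℤ) : Set (Fin d → ℤ) := {k | inCube d j m k}

section DyadicCube

variable {d j : ℕ} {m k k' : Fin d → ℤ}

lemma inCube_zero_iff : inCube d 0 m k ↔ k = m := by
  simp only [inCube, pow_zero, one_mul, Int.lt_add_one_iff, ← le_antisymm_iff, funext_iff,
    eq_comm]

lemma inCube.sub_lt (hk : inCube d j m k) (hk' : inCube d j m k') (t : Fin d) :
    k' t - k t < 2 ^ j := by
  have := hk t
  have := hk' t
  linarith

def inCubeEquiv (d j : ℕ) (m : Fin d → ℤ) :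
    {k : Fin d → ℤ // inCube d j m k} ≃ (Fin d → Fin (2 ^ j)) where
  toFun k t := ⟨(k.1 t - 2 ^ j * m t).toNat, by
    have := k.2 t
    exact (Int.toNat_lt (by linarith)).2 (by push_cast; linarith)⟩
  invFun v := ⟨fun t => 2 ^ j * m t + (v t : ℕ), fun t => by
    have : ((v t : ℕ) : ℤ) < 2 ^ j := by exact_mod_cast (v t).2
    constructor <;> linarith⟩
  left_inv k := by
    ext t
    simp [Int.toNat_of_nonneg (sub_nonneg.2 (k.2 t).1)]
  right_inv v := by
    funext t
    ext
    simp

lemma finite_dyadicCube : (dyadicCube d j m).Finite :=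
  Set.finite_coe_iff.mp (Finite.of_equiv _ (inCubeEquiv d j m).symm)

lemma tsum_inCube_const (c : ℝ≥0∞) :
    ∑' _ : {k : Fin d → ℤ // inCube d j m k}, c = 2 ^ (j * d) * c := by
  rw [← (inCubeEquiv d j m).symm.tsum_eq (fun _ => c), tsum_fintype]
  simp [pow_mul]

lemma tsum_indicator_inter_dyadicCube_le (A : Set (Fin d → ℤ)) (c : ℝ≥0∞) :
    ∑' k, (A ∩ dyadicCube d j m).indicator (fun _ => c) k ≤ 2 ^ (j * d) * c := by
  calc ∑' k, (A ∩ dyadicCube d j m).indicator (fun _ => c) k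
      ≤ ∑' k, (dyadicCube d j m).indicator (fun _ => c) k :=
        ENNReal.tsum_le_tsum fun k =>
          Set.indicator_le_indicator_of_subset Set.inter_subset_right (fun _ => zero_le) k
    _ = 2 ^ (j * d) * c := by
        rw [← tsum_subtype]
        exact tsum_inCube_const c

end DyadicCube

/-- `φ(2^j)^p 2^{-jd}`, the `p`-th power of the factor in front of `localSum` in `mNorm`. -/
def morreyWeight (d : ℕ) (p : ℝ) (φ : ℕ → ℝ) (j : ℕ) : ℝ := φ j ^ p / 2 ^ (j * d)

section MorreyNorm

variable {d : ℕ} {p : ℝ} {φ : ℕ → ℝ}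

lemma morreyWeight_nonneg {j : ℕ} (hφ : 0 ≤ φ j) : 0 ≤ morreyWeight d p φ j := by
  unfold morreyWeight
  positivity

lemma morreyWeight_mul_two_pow (j : ℕ) : morreyWeight d p φ j * 2 ^ (j * d) = φ j ^ p := by
  rw [morreyWeight, div_mul_cancel₀ _ (by positivity)]

lemma rpow_factor_mul_localSum (hp : 0 < p) {j : ℕ} (hφ : 0 ≤ φ j) (m : Fin d → ℤ)
    (lam : (Fin d → ℤ) → ℂ) :
    (ENNReal.ofReal (φ j) * (2 : ℝ≥0∞) ^ (-((j : ℝ) * d) / p) * localSum d p j m lam) ^ p =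
      ENNReal.ofReal (morreyWeight d p φ j) *
        ∑' k : {k : Fin d → ℤ // inCube d j m k}, ENNReal.ofReal ‖lam k.1‖ ^ p := by
  have h2 : ((2 : ℝ≥0∞) ^ (-((j : ℝ) * d) / p)) ^ p = (2 ^ (j * d))⁻¹ := by
    rw [← ENNReal.rpow_mul, div_mul_cancel₀ _ hp.ne', ENNReal.rpow_neg, ← ENNReal.rpow_natCast]
    push_cast
    rfl
  rw [ENNReal.mul_rpow_of_nonneg _ _ hp.le, ENNReal.mul_rpow_of_nonneg _ _ hp.le, h2, localSum,
    ← ENNReal.rpow_mul, one_div_mul_cancel hp.ne', ENNReal.rpow_one,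
    ENNReal.ofReal_rpow_of_nonneg hφ hp.le, morreyWeight,
    ENNReal.ofReal_div_of_pos (by positivity), ← div_eq_mul_inv]
  norm_cast

lemma le_mNorm (j : ℕ) (m : Fin d → ℤ) (lam : (Fin d → ℤ) → ℂ) :
    ENNReal.ofReal (φ j) * (2 : ℝ≥0∞) ^ (-((j : ℝ) * d) / p) * localSum d p j m lam ≤
      mNorm d p φ lam :=
  le_iSup₂ (f := fun j m => ENNReal.ofReal (φ j) * (2 : ℝ≥0∞) ^ (-((j : ℝ) * d) / p) *
    localSum d p j m lam) j m

lemma mNorm_le_of_forall_le (hp : 0 < p) (hφ : ∀ j, 0 ≤ φ j) {lam : (Fin d → ℤ) → ℂ}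
    {C : ℝ≥0∞} (h : ∀ j m, ENNReal.ofReal (morreyWeight d p φ j) *
      ∑' k : {k : Fin d → ℤ // inCube d j m k}, ENNReal.ofReal ‖lam k.1‖ ^ p ≤ C) :
    mNorm d p φ lam ≤ C ^ p⁻¹ :=
  iSup₂_le fun j m => (ENNReal.le_rpow_inv_iff hp).2 <|
    (rpow_factor_mul_localSum hp (hφ j) m lam).trans_le (h j m)

lemma ofReal_mul_le_mNorm (hp : 0 < p) {j : ℕ} (hφ : 0 ≤ φ j) {m : Fin d → ℤ}
    {lam : (Fin d → ℤ) → ℂ} {c : ℝ} (hc : ∀ k, inCube d j m k → c ≤ ‖lam k‖) :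
    ENNReal.ofReal (φ j * c) ≤ mNorm d p φ lam := by
  refine le_trans ?_ (le_mNorm j m lam)
  rw [← ENNReal.rpow_le_rpow_iff hp, rpow_factor_mul_localSum hp hφ]
  calc ENNReal.ofReal (φ j * c) ^ p
      = ENNReal.ofReal (morreyWeight d p φ j) * (2 ^ (j * d) * ENNReal.ofReal c ^ p) := by
        rw [ENNReal.ofReal_mul hφ, ENNReal.mul_rpow_of_nonneg _ _ hp.le,
          ENNReal.ofReal_rpow_of_nonneg hφ hp.le, ← morreyWeight_mul_two_pow (d := d),
          ENNReal.ofReal_mul (morreyWeight_nonneg hφ), mul_assoc]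
        norm_cast
    _ ≤ ENNReal.ofReal (morreyWeight d p φ j) *
        ∑' k : {k : Fin d → ℤ // inCube d j m k}, ENNReal.ofReal ‖lam k.1‖ ^ p := by
        rw [← tsum_inCube_const]
        gcongr with k
        exact hc k k.2

lemma ofReal_norm_le_mNorm (hp : 0 < p) (hφ1 : φ 0 = 1) (lam : (Fin d → ℤ) → ℂ)
    (k : Fin d → ℤ) : ENNReal.ofReal ‖lam k‖ ≤ mNorm d p φ lam := by
  have h := ofReal_mul_le_mNorm hp (hφ1 ▸ zero_le_one) (c := ‖lam k‖) (m := k)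
    fun k' hk' => by rw [inCube_zero_iff.1 hk']
  rwa [hφ1, one_mul] at h

lemma tendsto_cofinite_zero_of_approx (hp : 0 < p) (hφ1 : φ 0 = 1) {lam : (Fin d → ℤ) → ℂ}
    (h : ∀ ε : ℝ≥0∞, 0 < ε → ∃ mu, Tendsto mu cofinite (nhds 0) ∧ mNorm d p φ (lam - mu) < ε) :
    Tendsto lam cofinite (nhds 0) := by
  rw [Metric.tendsto_nhds]
  intro ε hε
  obtain ⟨mu, hmu, hlt⟩ := h (ENNReal.ofReal (ε / 2)) (by simpa using hε)
  filter_upwards [Metric.tendsto_nhds.1 hmu (ε / 2) (half_pos hε)] with k hk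
  have hdiff : ‖lam k - mu k‖ < ε / 2 := (ENNReal.ofReal_lt_ofReal_iff (half_pos hε)).1 <|
    (ofReal_norm_le_mNorm hp hφ1 (lam - mu) k).trans_lt hlt
  rw [dist_zero_right] at hk ⊢
  linarith [norm_le_norm_sub_add (lam k) (mu k)]

end MorreyNorm

namespace Gp

variable {d : ℕ} {p : ℝ} {φ : ℕ → ℝ}

lemma pos (hG : Gp d p φ) (k : ℕ) : 0 < φ k := hG.1 k

lemma monotone (hG : Gp d p φ) : Monotone φ := fun j k hjk => (hG.2 j k hjk).1

lemma antitone_morreyWeight (hG : Gp d p φ) (hp : 0 < p) : Antitone (morreyWeight d p φ) := by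
  intro j k hjk
  have hpow : ((2 : ℝ) ^ (((k : ℝ) - j) * d / p)) ^ p = 2 ^ (k * d) / 2 ^ (j * d) := by
    rw [← Real.rpow_mul zero_le_two, div_mul_cancel₀ _ hp.ne', sub_mul,
      Real.rpow_sub zero_lt_two]
    norm_cast
  calc morreyWeight d p φ k = φ k ^ p / 2 ^ (k * d) := rfl
    _ ≤ (φ j * 2 ^ (((k : ℝ) - j) * d / p)) ^ p / 2 ^ (k * d) := by
        gcongr
        exacts [(hG.pos k).le, (hG.2 j k hjk).2]
    _ = morreyWeight d p φ j := by
        rw [Real.mul_rpow (hG.pos j).le (by positivity), hpow, morreyWeight]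
        field_simp

end Gp

lemma tendsto_morreyWeight_atTop {d : ℕ} {p : ℝ} (hp : 0 < p) {φ : ℕ → ℝ} (hφ : ∀ k, 0 ≤ φ k)
    (hlim : Tendsto (fun k : ℕ => φ k * (2 : ℝ) ^ (-((k : ℝ) * d) / p)) atTop (nhds 0)) :
    Tendsto (morreyWeight d p φ) atTop (nhds 0) := by
  have h := hlim.rpow_const (p := p) (Or.inr hp.le)
  rw [Real.zero_rpow hp.ne'] at h
  refine h.congr fun k => ?_
  rw [Real.mul_rpow (hφ k) (by positivity), ← Real.rpow_mul zero_le_two,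
    div_mul_cancel₀ _ hp.ne', Real.rpow_neg zero_le_two, morreyWeight, div_eq_mul_inv]
  norm_cast

lemma ENNReal.tsum_le_three_of_le_geometric {f : ℕ → ℝ≥0∞} (i₀ : ℕ) (h₀ : f i₀ ≤ 1)
    (h : ∀ i, i ≠ i₀ → f i ≤ 2⁻¹ ^ i) : ∑' i, f i ≤ 3 := by
  rw [ENNReal.tsum_eq_add_tsum_ite i₀]
  refine (add_le_add h₀ (ENNReal.tsum_le_tsum (g := fun i => (2⁻¹ : ℝ≥0∞) ^ i) fun i => ?_)).trans
    ?_
  · split_ifs with hi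
    exacts [zero_le, h i hi]
  · rw [ENNReal.tsum_geometric, ENNReal.one_sub_inv_two, inv_inv]
    norm_num

lemma tsum_subtype_le_tsum_indicator_of_cover {α ι : Type*} {A : Set α} {B : ι → Set α}
    {f : α → ℝ≥0∞} {c : ι → ℝ≥0∞} (hf : ∀ k, f k ≠ 0 → ∃ i, k ∈ B i ∧ f k ≤ c i) :
    ∑' k : A, f k ≤ ∑' i, ∑' k, (A ∩ B i).indicator (fun _ => c i) k := by
  rw [tsum_subtype, ENNReal.tsum_comm]
  refine ENNReal.tsum_le_tsum fun k => ?_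
  by_cases hk : k ∈ A ∧ f k ≠ 0
  · obtain ⟨i, hki, hfk⟩ := hf k hk.2
    calc A.indicator f k = f k := Set.indicator_of_mem hk.1 f
      _ ≤ (A ∩ B i).indicator (fun _ => c i) k := by
        rwa [Set.indicator_of_mem (show k ∈ A ∩ B i from ⟨hk.1, hki⟩)]
      _ ≤ _ := ENNReal.le_tsum i
  · have h0 : A.indicator f k = 0 :=
      Set.indicator_apply_eq_zero.2 fun hA => not_not.1 fun h => hk ⟨hA, h⟩
    exact h0.trans_le zero_le

section CubeContributions

variable {d : ℕ} {p : ℝ} {φ : ℕ → ℝ}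

lemma two_pow_mul_ofReal_inv_rpow (hp : 0 < p) {s : ℕ} (hs : 0 < φ s) (n : ℕ) :
    2 ^ n * ENNReal.ofReal (φ s)⁻¹ ^ p = ENNReal.ofReal (2 ^ n / φ s ^ p) := by
  rw [ENNReal.ofReal_rpow_of_nonneg (inv_nonneg.2 hs.le) hp.le, Real.inv_rpow hs.le,
    div_eq_mul_inv, ENNReal.ofReal_mul (by positivity)]
  norm_cast

lemma mul_tsum_indicator_inter_dyadicCube_le (hp : 0 < p) {j : ℕ} (hj : 0 ≤ φ j) {s : ℕ}
    (hs : 0 < φ s) (A : Set (Fin d → ℤ)) (m : Fin d → ℤ) :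
    ENNReal.ofReal (morreyWeight d p φ j) *
        ∑' k, (A ∩ dyadicCube d s m).indicator (fun _ => ENNReal.ofReal (φ s)⁻¹ ^ p) k ≤
      ENNReal.ofReal (morreyWeight d p φ j / morreyWeight d p φ s) := by
  calc _ ≤ ENNReal.ofReal (morreyWeight d p φ j) *
          (2 ^ (s * d) * ENNReal.ofReal (φ s)⁻¹ ^ p) := by
        gcongr
        exact tsum_indicator_inter_dyadicCube_le A _
    _ = _ := by
        rw [two_pow_mul_ofReal_inv_rpow hp hs, ← ENNReal.ofReal_mul (morreyWeight_nonneg hj),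
          morreyWeight, morreyWeight, div_div_eq_mul_div, mul_div_assoc]

lemma mul_tsum_indicator_dyadicCube_inter_le (hp : 0 < p) {j : ℕ} (hj : 0 ≤ φ j) {s : ℕ}
    (hs : 0 < φ s) (A : Set (Fin d → ℤ)) (m : Fin d → ℤ) :
    ENNReal.ofReal (morreyWeight d p φ j) *
        ∑' k, (dyadicCube d j m ∩ A).indicator (fun _ => ENNReal.ofReal (φ s)⁻¹ ^ p) k ≤
      ENNReal.ofReal (φ j ^ p / φ s ^ p) := by
  calc _ ≤ ENNReal.ofReal (morreyWeight d p φ j) *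
          (2 ^ (j * d) * ENNReal.ofReal (φ s)⁻¹ ^ p) := by
        gcongr
        rw [Set.inter_comm]
        exact tsum_indicator_inter_dyadicCube_le A _
    _ = _ := by
        rw [two_pow_mul_ofReal_inv_rpow hp hs, ← ENNReal.ofReal_mul (morreyWeight_nonneg hj),
          ← mul_div_assoc, morreyWeight_mul_two_pow]

lemma Gp.mul_tsum_indicator_inter_le_one (hG : Gp d p φ) (hp : 0 < p) (j s : ℕ)
    (m m' : Fin d → ℤ) :
    ENNReal.ofReal (morreyWeight d p φ j) * ∑' k,
      (dyadicCube d j m ∩ dyadicCube d s m').indicator (fun _ => ENNReal.ofReal (φ s)⁻¹ ^ p) k ≤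
        1 := by
  rw [← ENNReal.ofReal_one]
  rcases le_total j s with hjs | hsj
  · refine (mul_tsum_indicator_dyadicCube_inter_le hp (hG.pos j).le (hG.pos s) _ m).trans ?_
    gcongr
    exact div_le_one_of_le₀ (by gcongr; exacts [(hG.pos j).le, hG.monotone hjs])
      (Real.rpow_nonneg (hG.pos s).le p)
  · refine (mul_tsum_indicator_inter_dyadicCube_le hp (hG.pos j).le (hG.pos s) _ m').trans ?_
    gcongr
    exact div_le_one_of_le₀ (hG.antitone_morreyWeight hp hsj)
      (morreyWeight_nonneg (hG.pos s).le)

/-- Among the cubes `Q_{-s_i, m_i}` met by `Q_{-j,m}`, the first contributes at most `1` to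
`φ(2^j)^p 2^{-jd} Σ_{Q_{-j,m}} |λ_k|^p`, and the `i`-th of the later ones, for which `j ≥ L_i`, at
most `ψ(j) / ψ(s_i) ≤ ψ(L_i) / ψ(s_i) ≤ 2^{-i}`, where `ψ = morreyWeight`. -/
theorem Gp.mNorm_le_of_sparse_cubes (hG : Gp d p φ) (hp : 0 < p) {s L : ℕ → ℕ}
    {m : ℕ → Fin d → ℤ}
    (hsep : ∀ ⦃i₀ i j m'⦄, i₀ < i → (dyadicCube d j m' ∩ dyadicCube d (s i₀) (m i₀)).Nonempty →
      (dyadicCube d j m' ∩ dyadicCube d (s i) (m i)).Nonempty → L i ≤ j)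
    (hdecay : ∀ i, morreyWeight d p φ (L i) ≤ (2 ^ i)⁻¹ * morreyWeight d p φ (s i))
    {lam : (Fin d → ℤ) → ℂ}
    (hlam : ∀ k, lam k ≠ 0 → ∃ i, inCube d (s i) (m i) k ∧ ‖lam k‖ ≤ (φ (s i))⁻¹) :
    mNorm d p φ lam ≤ 3 ^ p⁻¹ := by
  classical
  refine mNorm_le_of_forall_le hp (fun j => (hG.pos j).le) fun j m' => ?_
  set c : ℕ → ℝ≥0∞ := fun i => ENNReal.ofReal (φ (s i))⁻¹ ^ p
  set Q : ℕ → Set (Fin d → ℤ) := fun i => dyadicCube d j m' ∩ dyadicCube d (s i) (m i)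
  set T : ℕ → ℝ≥0∞ := fun i =>
    ENNReal.ofReal (morreyWeight d p φ j) * ∑' k, (Q i).indicator (fun _ => c i) k
  have hcover : ∀ k, ENNReal.ofReal ‖lam k‖ ^ p ≠ 0 →
      ∃ i, k ∈ dyadicCube d (s i) (m i) ∧ ENNReal.ofReal ‖lam k‖ ^ p ≤ c i := by
    intro k hk
    have hlamk : lam k ≠ 0 := fun h => hk (by simp [h, ENNReal.zero_rpow_of_pos hp])
    obtain ⟨i, hki, hle⟩ := hlam k hlamk
    exact ⟨i, hki, ENNReal.rpow_le_rpow (ENNReal.ofReal_le_ofReal hle) hp.le⟩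
  have hT_zero : ∀ i, ¬ (Q i).Nonempty → T i = 0 := fun i hi => by
    simp [T, Set.not_nonempty_iff_eq_empty.1 hi]
  calc _ ≤ ENNReal.ofReal (morreyWeight d p φ j) *
          ∑' i, ∑' k, (Q i).indicator (fun _ => c i) k := by
        gcongr
        exact tsum_subtype_le_tsum_indicator_of_cover hcover
    _ = ∑' i, T i := ENNReal.tsum_mul_left.symm
    _ ≤ 3 := by
      by_cases hP : ∃ i, (Q i).Nonempty
      · refine ENNReal.tsum_le_three_of_le_geometric (Nat.find hP)
          (hG.mul_tsum_indicator_inter_le_one hp _ _ _ _) fun i hi => ?_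
        by_cases hQi : (Q i).Nonempty
        · have hLj : L i ≤ j :=
            hsep (lt_of_le_of_ne (Nat.find_min' hP hQi) (Ne.symm hi)) (Nat.find_spec hP) hQi
          refine (mul_tsum_indicator_inter_dyadicCube_le hp (hG.pos j).le (hG.pos (s i)) _
            _).trans ?_
          rw [← ENNReal.inv_pow, ← ENNReal.ofReal_ofNat, ← ENNReal.ofReal_pow zero_le_two,
            ← ENNReal.ofReal_inv_of_pos (by positivity)]
          gcongr
          rw [div_le_iff₀ (by have := hG.pos (s i); unfold morreyWeight; positivity)]
          exact (hG.antitone_morreyWeight hp hLj).trans (hdecay i)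
        · rw [hT_zero i hQi]
          exact zero_le
      · rw [not_exists] at hP
        simp [hT_zero, hP]

end CubeContributions

lemma exists_gapped_ge (N : ℕ → ℕ) : ∃ L : ℕ → ℕ, (∀ i, N i ≤ L i) ∧ ∀ i, L i + 2 ≤ L (i + 1) :=
  ⟨fun i => ∑ k ∈ Finset.range (i + 1), N k + 2 * i,
    fun i => le_add_right (Finset.single_le_sum (by simp) (Finset.self_mem_range_succ i)),
    fun i => by simp only [Finset.sum_range_succ _ (i + 1)]; omega⟩

section SparseCorner

variable {d : ℕ} (t₀ : Fin d) (s L : ℕ → ℕ)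

/-- The cube `Q_{-s_i, m_i}` with this corner `m_i` lies in the slab
`2^{L_i} ≤ k t₀ < 2^{L_i} + 2^{s_i}` (when `s_i ≤ L_i`). -/
def sparseCorner (i : ℕ) : Fin d → ℤ := Pi.single t₀ (2 ^ (L i - s i))

variable {t₀ s L}

lemma inCube_sparseCorner_bounds {i : ℕ} (hsL : s i ≤ L i) {k : Fin d → ℤ}
    (hk : inCube d (s i) (sparseCorner t₀ s L i) k) :
    2 ^ L i ≤ k t₀ ∧ k t₀ < 2 ^ (L i + 1) := by
  have hL : (2 : ℤ) ^ s i * 2 ^ (L i - s i) = 2 ^ L i := by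
    rw [← pow_add, Nat.add_sub_cancel' hsL]
  have hs : (2 : ℤ) ^ s i ≤ 2 ^ L i := pow_le_pow_right₀ one_le_two hsL
  have := hk t₀
  simp only [sparseCorner, Pi.single_eq_same, mul_add, mul_one, hL] at this
  exact ⟨this.1, by rw [pow_succ]; linarith⟩

lemma sparseCorner_separated (hsL : ∀ i, s i ≤ L i) (hgap : ∀ i, L i + 2 ≤ L (i + 1))
    ⦃i₀ i j : ℕ⦄ ⦃m : Fin d → ℤ⦄ (hi : i₀ < i)
    (h₀ : (dyadicCube d j m ∩ dyadicCube d (s i₀) (sparseCorner t₀ s L i₀)).Nonempty)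
    (h : (dyadicCube d j m ∩ dyadicCube d (s i) (sparseCorner t₀ s L i)).Nonempty) :
    L i ≤ j := by
  obtain ⟨k, hkQ, hk⟩ := h₀
  obtain ⟨k', hk'Q, hk'⟩ := h
  have hL : L i₀ + 2 ≤ L i :=
    (hgap i₀).trans (monotone_nat_of_le_succ (fun n => by linarith [hgap n]) hi)
  have hk_lt := (inCube_sparseCorner_bounds (hsL i₀) hk).2
  have hk'_ge := (inCube_sparseCorner_bounds (hsL i) hk').1
  have hwidth := inCube.sub_lt hkQ hk'Q t₀
  by_contra! hj
  have h₁ : (2 : ℤ) ^ (L i₀ + 1) ≤ 2 ^ (L i - 1) := pow_le_pow_right₀ one_le_two (by omega)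
  have h₂ : (2 : ℤ) ^ j ≤ 2 ^ (L i - 1) := pow_le_pow_right₀ one_le_two (by omega)
  have h₃ : (2 : ℤ) ^ L i = 2 * 2 ^ (L i - 1) := by
    rw [← pow_succ', Nat.sub_add_cancel (by omega)]
  linarith

lemma eq_of_inCube_sparseCorner (hsL : ∀ i, s i ≤ L i) (hL : StrictMono L) {i i' : ℕ}
    {k : Fin d → ℤ} (hk : inCube d (s i) (sparseCorner t₀ s L i) k)
    (hk' : inCube d (s i') (sparseCorner t₀ s L i') k) : i = i' := by
  have h := inCube_sparseCorner_bounds (hsL i) hk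
  have h' := inCube_sparseCorner_bounds (hsL i') hk'
  have hlt : ∀ a b : ℕ, (2 : ℤ) ^ a < 2 ^ (b + 1) → a ≤ b := fun a b hab =>
    Nat.lt_succ_iff.1 ((pow_lt_pow_iff_right₀ (one_lt_two : (1 : ℤ) < 2)).1 hab)
  exact hL.injective (le_antisymm (hlt _ _ (by linarith)) (hlt _ _ (by linarith)))

lemma le_of_inCube_sparseCorner (hsL : ∀ i, s i ≤ L i) (hL : StrictMono L) {i : ℕ}
    {k : Fin d → ℤ} (hk : inCube d (s i) (sparseCorner t₀ s L i) k) : (i : ℤ) ≤ k t₀ := by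
  have hi : ((i : ℕ) : ℤ) < 2 ^ L i := by
    exact_mod_cast (hL.id_le i).trans_lt Nat.lt_two_pow_self
  linarith [(inCube_sparseCorner_bounds (hsL i) hk).1]

end SparseCorner

open Classical in
def cubeSeq (d : ℕ) (φ : ℕ → ℝ) (s : ℕ → ℕ) (m : ℕ → Fin d → ℤ) : (Fin d → ℤ) → ℂ :=
  fun k => if h : ∃ i, inCube d (s i) (m i) k then ((φ (s h.choose))⁻¹ : ℝ) else 0

section CubeSeq

variable {d : ℕ} {φ : ℕ → ℝ} {s : ℕ → ℕ} {m : ℕ → Fin d → ℤ} {k : Fin d → ℤ}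

lemma exists_of_cubeSeq_ne_zero (hk : cubeSeq d φ s m k ≠ 0) :
    ∃ i, inCube d (s i) (m i) k ∧ cubeSeq d φ s m k = ((φ (s i))⁻¹ : ℝ) := by
  by_cases h : ∃ i, inCube d (s i) (m i) k
  · exact ⟨h.choose, h.choose_spec, dif_pos h⟩
  · exact absurd (dif_neg h) hk

lemma cubeSeq_of_inCube
    (hdisj : ∀ {i i' k}, inCube d (s i) (m i) k → inCube d (s i') (m i') k → i = i')
    {i : ℕ} (hk : inCube d (s i) (m i) k) : cubeSeq d φ s m k = ((φ (s i))⁻¹ : ℝ) := by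
  have h : ∃ i, inCube d (s i) (m i) k := ⟨i, hk⟩
  rw [cubeSeq, dif_pos h, hdisj h.choose_spec hk]

end CubeSeq

lemma exists_forall_notMem_of_finite {α : Type*} {P : ℕ → α → Prop} {f : α → ℤ}
    (hP : ∀ i k, P i k → (i : ℤ) ≤ f k) {S : Set α} (hS : S.Finite) :
    ∃ i, ∀ k, P i k → k ∉ S := by
  obtain ⟨b, hb⟩ := (hS.image f).bddAbove
  refine ⟨b.toNat + 1, fun k hk hkS => ?_⟩
  have h₁ := hb ⟨k, hkS, rfl⟩
  have h₂ := hP _ k hk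
  omega

namespace Gp

variable {d : ℕ} {p : ℝ} {φ : ℕ → ℝ}

theorem exists_sparse_cubeSeq (hG : Gp d p φ) (hp : 0 < p)
    (hlim : Tendsto (morreyWeight d p φ) atTop (nhds 0)) (t₀ : Fin d) (s : ℕ → ℕ) :
    ∃ m : ℕ → Fin d → ℤ, mNorm d p φ (cubeSeq d φ s m) < ⊤ ∧
      (∀ i k, inCube d (s i) (m i) k → cubeSeq d φ s m k = ((φ (s i))⁻¹ : ℝ)) ∧
      (∀ i k, inCube d (s i) (m i) k → (i : ℤ) ≤ k t₀) := by
  have hthreshold : ∀ i, ∃ N, ∀ n ≥ N,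
      morreyWeight d p φ n ≤ (2 ^ i)⁻¹ * morreyWeight d p φ (s i) :=
    fun i => eventually_atTop.1 <| hlim.eventually <| ge_mem_nhds <| by
      have := hG.pos (s i)
      unfold morreyWeight
      positivity
  choose N hN using hthreshold
  obtain ⟨L, hNL, hgap⟩ := exists_gapped_ge fun i => max (N i) (s i)
  have hsL : ∀ i, s i ≤ L i := fun i => (le_max_right _ _).trans (hNL i)
  have hL : StrictMono L := strictMono_nat_of_lt_succ fun i => by linarith [hgap i]
  refine ⟨sparseCorner t₀ s L, ?_, fun i k hk => cubeSeq_of_inCube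
    (eq_of_inCube_sparseCorner hsL hL) hk, fun i k hk => le_of_inCube_sparseCorner hsL hL hk⟩
  refine (hG.mNorm_le_of_sparse_cubes hp (sparseCorner_separated (t₀ := t₀) hsL hgap)
    (fun i => hN i _ ((le_max_left _ _).trans (hNL i))) fun k hk => ?_).trans_lt
    (ENNReal.rpow_lt_top_of_nonneg (inv_nonneg.2 hp.le) (by norm_num))
  obtain ⟨i, hki, hval⟩ := exists_of_cubeSeq_ne_zero hk
  exact ⟨i, hki, by rw [hval, Complex.norm_real, Real.norm_of_nonneg (inv_nonneg.2 (hG.pos _).le)]⟩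

theorem exists_tendsto_zero_not_approx_finite_support (hG : Gp d p φ) (hp : 0 < p)
    (hlim : Tendsto (morreyWeight d p φ) atTop (nhds 0)) (hunb : ∀ C : ℝ, ∃ k, C < φ k)
    (t₀ : Fin d) :
    ∃ lam : (Fin d → ℤ) → ℂ, mNorm d p φ lam < ⊤ ∧ Tendsto lam cofinite (nhds 0) ∧
      ¬ ∀ ε : ℝ≥0∞, 0 < ε → ∃ mu : (Fin d → ℤ) → ℂ,
        {k | mu k ≠ 0}.Finite ∧ mNorm d p φ (lam - mu) < ε := by
  choose s hs using fun i : ℕ => hunb (i + 1)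
  obtain ⟨m, hfin, hval, hesc⟩ := hG.exists_sparse_cubeSeq hp hlim t₀ s
  refine ⟨cubeSeq d φ s m, hfin, Metric.tendsto_nhds.2 fun ε hε => ?_, fun happrox => ?_⟩
  · obtain ⟨n, hn⟩ := exists_nat_gt ε⁻¹
    rw [eventually_cofinite]
    refine ((Set.finite_Iio n).biUnion fun i _ => finite_dyadicCube (j := s i) (m := m i)).subset
      fun k hk => ?_
    have hk0 : cubeSeq d φ s m k ≠ 0 := fun h0 => hk (by simpa [h0] using hε)
    obtain ⟨i, hki, hv⟩ := exists_of_cubeSeq_ne_zero hk0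
    refine Set.mem_biUnion (show i < n from ?_) hki
    by_contra! hni
    have hφ : ε⁻¹ < φ (s i) := hn.trans (by linarith [hs i, (Nat.cast_le (α := ℝ)).2 hni])
    apply hk
    rw [hv, dist_zero_right, Complex.norm_real, Real.norm_of_nonneg (inv_nonneg.2 (hG.pos _).le)]
    exact inv_lt_of_inv_lt₀ hε hφ
  · obtain ⟨mu, hmu, hlt⟩ := happrox 1 one_pos
    obtain ⟨i, hi⟩ := exists_forall_notMem_of_finite hesc hmu
    have hone := ofReal_mul_le_mNorm hp (hG.pos (s i)).le (c := (φ (s i))⁻¹)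
      (lam := cubeSeq d φ s m - mu) fun k hk => by
        rw [Pi.sub_apply, not_not.1 (hi k hk), sub_zero, hval i k hk, Complex.norm_real,
          Real.norm_of_nonneg (inv_nonneg.2 (hG.pos _).le)]
    rw [mul_inv_cancel₀ (hG.pos _).ne', ENNReal.ofReal_one] at hone
    exact hlt.not_ge hone

theorem exists_mNorm_lt_top_not_tendsto_zero (hG : Gp d p φ) (hp : 0 < p)
    (hlim : Tendsto (morreyWeight d p φ) atTop (nhds 0)) (t₀ : Fin d) :
    ∃ lam : (Fin d → ℤ) → ℂ, mNorm d p φ lam < ⊤ ∧ ¬ Tendsto lam cofinite (nhds 0) := by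
  obtain ⟨m, hfin, hval, hesc⟩ := hG.exists_sparse_cubeSeq hp hlim t₀ 0
  refine ⟨_, hfin, fun htends => ?_⟩
  have hS := eventually_cofinite.1 (Metric.tendsto_nhds.1 htends _ (inv_pos.2 (hG.pos 0)))
  obtain ⟨i, hi⟩ := exists_forall_notMem_of_finite hesc hS
  have hmi : inCube d 0 (m i) (m i) := inCube_zero_iff.2 rfl
  apply hi _ hmi
  simp [hval i _ hmi, abs_of_pos (hG.pos 0)]

end Gp

theorem stmt_12 (d : ℕ) (hd : 0 < d) (p : ℝ) (hp : 0 < p)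
    (φ : ℕ → ℝ) (hGp : Gp d p φ) (hφ1 : φ 0 = 1)
    (hunb : ∀ C : ℝ, ∃ k, C < φ k)
    (hlim : Tendsto (fun k : ℕ => φ k * (2 : ℝ) ^ (-((k : ℝ) * d) / p))
      atTop (nhds 0))
    (M M0 M00 : Set ((Fin d → ℤ) → ℂ))
    (hM : M = {lam | mNorm d p φ lam < ⊤})
    (hM0 : M0 = {lam | mNorm d p φ lam < ⊤ ∧ Tendsto lam cofinite (nhds 0)})
    (hM00 : M00 = {lam | mNorm d p φ lam < ⊤ ∧
      ∀ ε : ℝ≥0∞, 0 < ε → ∃ mu : (Fin d → ℤ) → ℂ,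
        {k | mu k ≠ 0}.Finite ∧ mNorm d p φ (lam - mu) < ε}) :
    (∀ lam : (Fin d → ℤ) → ℂ,
      (∀ ε : ℝ≥0∞, 0 < ε → ∃ mu ∈ M0, mNorm d p φ (lam - mu) < ε) →
      mNorm d p φ lam < ⊤ → lam ∈ M0) ∧
    M00 ⊂ M0 ∧ M0 ⊂ M := by
  subst hM hM0 hM00
  have hweight := tendsto_morreyWeight_atTop hp (fun k => (hGp.pos k).le) hlim
  refine ⟨fun lam happrox hfin => ⟨hfin, tendsto_cofinite_zero_of_approx hp hφ1 fun ε hε => ?_⟩,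
    ?_, ?_⟩
  · obtain ⟨mu, hmu, hlt⟩ := happrox ε hε
    exact ⟨mu, hmu.2, hlt⟩
  · obtain ⟨lam, hfin, htends, hnot⟩ :=
      hGp.exists_tendsto_zero_not_approx_finite_support hp hweight hunb ⟨0, hd⟩
    refine (Set.ssubset_iff_of_subset <| Set.ofPred_subset_ofPred.2 fun nu hnu =>
      ⟨hnu.1, tendsto_cofinite_zero_of_approx hp hφ1 fun ε hε => ?_⟩).2
      ⟨lam, ⟨hfin, htends⟩, fun h => hnot h.2⟩
    obtain ⟨mu, hmu, hlt⟩ := hnu.2 ε hε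
    exact ⟨mu, tendsto_const_nhds.congr'
      (hmu.eventually_cofinite_notMem.mono fun k hk => (not_not.1 hk).symm), hlt⟩
  · obtain ⟨lam, hfin, hnot⟩ := hGp.exists_mNorm_lt_top_not_tendsto_zero hp hweight ⟨0, hd⟩
    exact (Set.ssubset_iff_of_subset fun _ h => h.1).2 ⟨lam, hfin, fun h => hnot h.2⟩
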